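/- Let W ⊆ ℝ^d be a convex set containing an open neighborhood of 0, let P, Q be probability measures, and let g be a bounded measurable feature map. Define JS_g(P,Q) = sup_{w ∈ W} [E_P log sigmoid(⟨w, g(X)⟩) + E_Q log(1 − sigmoid(⟨w, g(X)⟩))] + log 4. Then JS_g(P,Q) = 0 if and only if E_P g(X) = E_Q g(X). -/

import Mathlib

open MeasureTheory

noncomputable def sigmoid (t : ℝ) : ℝ := 1 / (1 + Real.exp (-t))

open Real hiding sigmoid

/-!
Write `F(w)` for the objective; since `log (1 - σ t) = log σ (-t)`, it is
`E_P log σ ⟪w, g⟫ + E_Q log σ (-⟪w, g⟫)`. As `log σ` is concave and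
`log σ t + log σ (-t) ≤ -log 4` (because `σ t · σ (-t) ≤ 1/4`), Jensen's inequality gives
`F(w) ≤ log σ s + log σ (-s) ≤ -log 4 = F(0)` with `s = ⟪w, E_P g⟫ = ⟪w, E_Q g⟫` once the means
agree. Conversely, if the supremum is `F(0)`, then `0` is a local maximum of `F` because `W` is a
neighbourhood of `0`, so the derivative `½ ⟪v, E_P g - E_Q g⟫` of `t ↦ F(t v)` at `0` vanishes;
take `v = E_P g - E_Q g`.
-/

lemma sigmoid_eq_real_sigmoid : sigmoid = Real.sigmoid :=
  funext fun _ => one_div _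

noncomputable def logSigmoid (t : ℝ) : ℝ := log (Real.sigmoid t)

lemma hasDerivAt_logSigmoid (t : ℝ) : HasDerivAt logSigmoid (Real.sigmoid (-t)) t := by
  have h := (hasDerivAt_sigmoid t).log (sigmoid_pos t).ne'
  rwa [mul_div_cancel_left₀ _ (sigmoid_pos t).ne', ← sigmoid_neg] at h

lemma hasDerivAt_logSigmoid_neg (t : ℝ) :
    HasDerivAt (fun s => logSigmoid (-s)) (-Real.sigmoid t) t := by
  simpa [Function.comp_def] using (hasDerivAt_logSigmoid (-t)).comp t (hasDerivAt_neg t)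

lemma continuous_logSigmoid : Continuous logSigmoid :=
  continuous_iff_continuousAt.2 fun t => (hasDerivAt_logSigmoid t).continuousAt

lemma logSigmoid_nonpos (t : ℝ) : logSigmoid t ≤ 0 :=
  log_nonpos (sigmoid_nonneg t) (sigmoid_le_one t)

lemma concaveOn_logSigmoid : ConcaveOn ℝ Set.univ logSigmoid := by
  refine Antitone.concaveOn_univ_of_deriv
    (fun t => (hasDerivAt_logSigmoid t).differentiableAt) ?_
  rw [funext fun t => (hasDerivAt_logSigmoid t).deriv]
  exact sigmoid_monotone.comp_antitone fun _ _ => neg_le_neg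

lemma logSigmoid_add_logSigmoid_neg_le (t : ℝ) : logSigmoid t + logSigmoid (-t) ≤ -log 4 := by
  have h : Real.sigmoid t * Real.sigmoid (-t) ≤ 4⁻¹ := by
    rw [sigmoid_neg]
    nlinarith [sq_nonneg (2 * Real.sigmoid t - 1)]
  rw [logSigmoid, logSigmoid, ← log_mul (sigmoid_pos t).ne' (sigmoid_pos _).ne', ← log_inv]
  exact log_le_log (mul_pos (sigmoid_pos t) (sigmoid_pos _)) h

lemma logSigmoid_zero_add_logSigmoid_zero : logSigmoid 0 + logSigmoid 0 = -log 4 := by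
  rw [logSigmoid, sigmoid_zero, log_inv, show (4 : ℝ) = 2 ^ 2 by norm_num, log_pow]
  push_cast
  ring

lemma isMaxOn_iff_csSup_image_eq {α β : Type*} [ConditionallyCompleteLattice β] {f : α → β}
    {s : Set α} {a : α} (ha : a ∈ s) (hbdd : BddAbove (f '' s)) :
    IsMaxOn f s a ↔ sSup (f '' s) = f a :=
  ⟨fun h => IsGreatest.csSup_eq ⟨Set.mem_image_of_mem f ha, by
      rintro _ ⟨w, hw, rfl⟩
      exact h hw⟩,
    fun h w hw => h ▸ le_csSup hbdd (Set.mem_image_of_mem f hw)⟩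

lemma abs_inner_le_of_norm_le {Ω E : Type*} [NormedAddCommGroup E] [InnerProductSpace ℝ E]
    {g : Ω → E} {C : ℝ} (hgb : ∀ x, ‖g x‖ ≤ C) (w : E) (x : Ω) :
    |inner ℝ w (g x)| ≤ ‖w‖ * C :=
  (abs_real_inner_le_norm _ _).trans (mul_le_mul_of_nonneg_left (hgb x) (norm_nonneg w))

section BoundedIntegrand

variable {Ω : Type*} [MeasurableSpace Ω] {μ : Measure Ω} {c : Ω → ℝ} {K : ℝ}

lemma integrable_comp_of_abs_le [IsFiniteMeasure μ] {f : ℝ → ℝ} (hf : Continuous f)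
    (hc : AEStronglyMeasurable c μ) (hcK : ∀ x, |c x| ≤ K) : Integrable (fun x => f (c x)) μ := by
  obtain ⟨M, hM⟩ := (isCompact_Icc (a := -K) (b := K)).exists_bound_of_continuousOn hf.continuousOn
  exact Integrable.of_bound (hf.comp_aestronglyMeasurable hc) M
    (ae_of_all _ fun x => hM _ (abs_le.1 (hcK x)))

lemma hasDerivAt_integral_comp_mul [IsFiniteMeasure μ] {f f' : ℝ → ℝ}
    (hf : ∀ t, HasDerivAt f (f' t) t) (hf' : Continuous f') {M : ℝ} (hf'M : ∀ t, |f' t| ≤ M)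
    (hc : AEStronglyMeasurable c μ) (hcK : ∀ x, |c x| ≤ K) (t₀ : ℝ) :
    HasDerivAt (fun t => ∫ x, f (t * c x) ∂μ) (∫ x, f' (t₀ * c x) * c x ∂μ) t₀ := by
  have hfc : Continuous f := continuous_iff_continuousAt.2 fun t => (hf t).continuousAt
  have hM : 0 ≤ M := (abs_nonneg _).trans (hf'M 0)
  refine (hasDerivAt_integral_of_dominated_loc_of_deriv_le (F := fun t x => f (t * c x))
    (F' := fun t x => f' (t * c x) * c x) (x₀ := t₀) (bound := fun _ => M * K) Filter.univ_mem
    (Filter.Eventually.of_forall fun t =>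
      hfc.comp_aestronglyMeasurable (aestronglyMeasurable_const.mul hc))
    (integrable_comp_of_abs_le (K := |t₀| * K) hfc (aestronglyMeasurable_const.mul hc)
      fun x => by rw [abs_mul]; exact mul_le_mul_of_nonneg_left (hcK x) (abs_nonneg t₀))
    ((hf'.comp_aestronglyMeasurable (aestronglyMeasurable_const.mul hc)).mul hc)
    (ae_of_all _ fun x t _ => by
      rw [Real.norm_eq_abs, abs_mul]
      exact mul_le_mul (hf'M _) (hcK x) (abs_nonneg _) hM)
    (integrable_const _)
    (ae_of_all _ fun x t _ => (hf (t * c x)).comp t (hasDerivAt_mul_const (c x)))).2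
    |>.congr_deriv (by simp)

lemma integral_logSigmoid_le [IsProbabilityMeasure μ] (hc : AEStronglyMeasurable c μ)
    (hcK : ∀ x, |c x| ≤ K) : ∫ x, logSigmoid (c x) ∂μ ≤ logSigmoid (∫ x, c x ∂μ) :=
  concaveOn_logSigmoid.le_map_integral continuous_logSigmoid.continuousOn isClosed_univ
    (ae_of_all _ fun _ => trivial) (integrable_comp_of_abs_le continuous_id hc hcK)
    (integrable_comp_of_abs_le continuous_logSigmoid hc hcK)

end BoundedIntegrand

noncomputable def jsObjective {Ω E : Type*} [MeasurableSpace Ω] [NormedAddCommGroup E]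
    [InnerProductSpace ℝ E] (P Q : Measure Ω) (g : Ω → E) (w : E) : ℝ :=
  (∫ x, logSigmoid (inner ℝ w (g x)) ∂P) + ∫ x, logSigmoid (-inner ℝ w (g x)) ∂Q

section Objective

variable {Ω E : Type*} [MeasurableSpace Ω] [NormedAddCommGroup E] [InnerProductSpace ℝ E]
  {P Q : Measure Ω} {g : Ω → E} {C : ℝ}

lemma jsObjective_nonpos (w : E) : jsObjective P Q g w ≤ 0 :=
  add_nonpos (integral_nonpos fun _ => logSigmoid_nonpos _)
    (integral_nonpos fun _ => logSigmoid_nonpos _)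

lemma jsObjective_zero [IsProbabilityMeasure P] [IsProbabilityMeasure Q] :
    jsObjective P Q g 0 = -log 4 := by
  simp [jsObjective, logSigmoid_zero_add_logSigmoid_zero]

variable [CompleteSpace E]

lemma jsObjective_le_of_integral_eq [IsProbabilityMeasure P] [IsProbabilityMeasure Q]
    (hgP : AEStronglyMeasurable g P) (hgQ : AEStronglyMeasurable g Q) (hgb : ∀ x, ‖g x‖ ≤ C)
    (hm : ∫ x, g x ∂P = ∫ x, g x ∂Q) (w : E) : jsObjective P Q g w ≤ -log 4 := by
  have hP := integral_logSigmoid_le (aestronglyMeasurable_const.inner hgP)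
    (abs_inner_le_of_norm_le hgb w)
  have hQ := integral_logSigmoid_le (c := fun x => -inner ℝ w (g x))
    (aestronglyMeasurable_const.inner hgQ).neg
    fun x => (abs_neg _).trans_le (abs_inner_le_of_norm_le hgb w x)
  rw [integral_inner (Integrable.of_bound hgP C (ae_of_all _ hgb))] at hP
  rw [integral_neg, integral_inner (Integrable.of_bound hgQ C (ae_of_all _ hgb)), ← hm] at hQ
  exact (add_le_add hP hQ).trans (logSigmoid_add_logSigmoid_neg_le _)

lemma hasDerivAt_jsObjective_smul [IsFiniteMeasure P] [IsFiniteMeasure Q]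
    (hgP : AEStronglyMeasurable g P) (hgQ : AEStronglyMeasurable g Q) (hgb : ∀ x, ‖g x‖ ≤ C)
    (v : E) :
    HasDerivAt (fun t : ℝ => jsObjective P Q g (t • v))
      (2⁻¹ * inner ℝ v ((∫ x, g x ∂P) - ∫ x, g x ∂Q)) 0 := by
  have hP := hasDerivAt_integral_comp_mul hasDerivAt_logSigmoid
    (continuous_sigmoid.comp continuous_neg) (fun t => (abs_of_pos (sigmoid_pos _)).trans_le
      (sigmoid_le_one _)) (aestronglyMeasurable_const.inner hgP)
    (abs_inner_le_of_norm_le hgb v) 0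
  have hQ := hasDerivAt_integral_comp_mul hasDerivAt_logSigmoid_neg continuous_sigmoid.neg
    (fun t => by rw [abs_neg, abs_of_pos (sigmoid_pos _)]; exact sigmoid_le_one _)
    (aestronglyMeasurable_const.inner hgQ) (abs_inner_le_of_norm_le hgb v) 0
  have hF : (fun t : ℝ => jsObjective P Q g (t • v)) = fun t =>
      (∫ x, logSigmoid (t * inner ℝ v (g x)) ∂P) +
        ∫ x, logSigmoid (-(t * inner ℝ v (g x))) ∂Q := by
    funext t
    simp only [jsObjective, real_inner_smul_left]
  rw [hF]
  refine (hP.add hQ).congr_deriv ?_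
  simp only [zero_mul, neg_zero, sigmoid_zero, neg_mul, integral_neg, integral_const_mul,
    integral_inner (Integrable.of_bound hgP C (ae_of_all _ hgb)),
    integral_inner (Integrable.of_bound hgQ C (ae_of_all _ hgb)), inner_sub_right]
  ring

lemma integral_eq_of_isLocalMax_jsObjective [IsFiniteMeasure P] [IsFiniteMeasure Q]
    (hgP : AEStronglyMeasurable g P) (hgQ : AEStronglyMeasurable g Q) (hgb : ∀ x, ‖g x‖ ≤ C)
    (h : IsLocalMax (jsObjective P Q g) 0) : ∫ x, g x ∂P = ∫ x, g x ∂Q := by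
  set v := (∫ x, g x ∂P) - ∫ x, g x ∂Q
  have hv : IsLocalMax (jsObjective P Q g ∘ fun t : ℝ => t • v) 0 :=
    IsLocalMax.comp_continuous (by rwa [zero_smul])
      (continuous_id.smul continuous_const).continuousAt
  have h0 : 2⁻¹ * inner ℝ v v = 0 :=
    hv.hasDerivAt_eq_zero (hasDerivAt_jsObjective_smul hgP hgQ hgb v)
  exact sub_eq_zero.1 (inner_self_eq_zero.1 ((mul_eq_zero.1 h0).resolve_left (by norm_num)))

end Objective

theorem restricted_js_zero_iff_moment_match_general
    {Ω : Type*} [MeasurableSpace Ω] {d : ℕ}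
    (P Q : Measure Ω) [IsProbabilityMeasure P] [IsProbabilityMeasure Q]
    (g : Ω → EuclideanSpace ℝ (Fin d)) (hg : Measurable g)
    (C : ℝ) (hgb : ∀ x, ‖g x‖ ≤ C)
    (W : Set (EuclideanSpace ℝ (Fin d)))
    (hW0 : W ∈ nhds (0 : EuclideanSpace ℝ (Fin d))) :
    (sSup {y : ℝ | ∃ w ∈ W, y =
        (∫ x, Real.log (sigmoid (inner ℝ w (g x))) ∂P) +
        (∫ x, Real.log (1 - sigmoid (inner ℝ w (g x))) ∂Q)} + Real.log 4 = 0)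
    ↔ (∫ x, g x ∂P) = (∫ x, g x ∂Q) := by
  have hgP : AEStronglyMeasurable g P := hg.aestronglyMeasurable
  have hgQ : AEStronglyMeasurable g Q := hg.aestronglyMeasurable
  have hS : {y : ℝ | ∃ w ∈ W, y =
      (∫ x, Real.log (sigmoid (inner ℝ w (g x))) ∂P) +
      (∫ x, Real.log (1 - sigmoid (inner ℝ w (g x))) ∂Q)} = jsObjective P Q g '' W := by
    ext y
    simp [jsObjective, logSigmoid, sigmoid_eq_real_sigmoid, ← Real.sigmoid_neg, eq_comm]
  have hbdd : BddAbove (jsObjective P Q g '' W) := ⟨0, by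
    rintro _ ⟨w, -, rfl⟩
    exact jsObjective_nonpos w⟩
  rw [hS, add_eq_zero_iff_eq_neg, ← jsObjective_zero (P := P) (Q := Q) (g := g),
    ← isMaxOn_iff_csSup_image_eq (mem_of_mem_nhds hW0) hbdd]
  exact ⟨fun h => integral_eq_of_isLocalMax_jsObjective hgP hgQ hgb (h.isLocalMax hW0),
    fun hm w _ => (jsObjective_le_of_integral_eq hgP hgQ hgb hm w).trans_eq jsObjective_zero.symm⟩

/-- `JS_g(P,Q) = 0` iff `E_P g = E_Q g`, for a convex `W` containing a
neighborhood of `0`. -/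
theorem restricted_js_zero_iff_moment_match
    {Ω : Type*} [MeasurableSpace Ω] {d : ℕ}
    (P Q : Measure Ω) [IsProbabilityMeasure P] [IsProbabilityMeasure Q]
    (g : Ω → EuclideanSpace ℝ (Fin d)) (hg : Measurable g)
    (C : ℝ) (hgb : ∀ x, ‖g x‖ ≤ C)
    (W : Set (EuclideanSpace ℝ (Fin d))) (hW : Convex ℝ W)
    (hW0 : W ∈ nhds (0 : EuclideanSpace ℝ (Fin d))) :
    (sSup {y : ℝ | ∃ w ∈ W, y =
        (∫ x, Real.log (sigmoid (inner ℝ w (g x))) ∂P) +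
        (∫ x, Real.log (1 - sigmoid (inner ℝ w (g x))) ∂Q)} + Real.log 4 = 0)
    ↔ (∫ x, g x ∂P) = (∫ x, g x ∂Q) :=
  restricted_js_zero_iff_moment_match_general P Q g hg C hgb W hW0
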